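/- arXiv:1503.08233 — 6 statements merged into one kernel-verified Lean document; each statement's English description precedes it below -/
import Mathlib

section
/- Let v₀ > 0, let u : ℝ² → ℝ² be a twice continuously differentiable divergence-free vector field, and let (r*, θ*) be an equilibrium of the front-element dynamics. Let μ ∈ ℝ be the number satisfying Du(r*) ĝ(θ*) = μ ĝ(θ*) (ĝ(θ*) is an eigenvector of Du(r*) at any equilibrium), assume μ ≠ 0, and set a·g := Σ_{i,j,k} n̂ᵢ(θ*) ĝⱼ(θ*) ĝₖ(θ*) ∂ⱼ∂ₖuᵢ(r*) and μ' := (2μ² − v₀ (a·g))/μ. Then the characteristic polynomial of the Jacobian matrix at (r*, θ*) of the three-dimensional vector field F(r, θ) = (u(r) + v₀ n̂(θ), −n̂(θ)·(Du(r) ĝ(θ))) equals λ ↦ (λ + μ)(λ² + μλ − μμ'); equivalently its eigenvalues are λ₀ = −μ and λ± = (1/2)(−μ ± √(μ² + 4μμ')). -/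
noncomputable section

open Real Polynomial

/-- Points in the plane, with the Euclidean norm. -/
abbrev Pt : Type := EuclideanSpace ℝ (Fin 2)

/-- Build a point of the plane from two coordinates. -/
def vec2 (a b : ℝ) : Pt := (WithLp.equiv 2 (Fin 2 → ℝ)).symm ![a, b]

/-- Front tangent direction ĝ(θ) = (cos θ, sin θ). -/
def ghat (θ : ℝ) : Pt := vec2 (Real.cos θ) (Real.sin θ)

/-- Front normal (burning) direction n̂(θ) = (sin θ, −cos θ). -/
def nhat (θ : ℝ) : Pt := vec2 (Real.sin θ) (-(Real.cos θ))

/-- Euclidean dot product on the plane. -/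
def dot (v w : Pt) : ℝ := v 0 * w 0 + v 1 * w 1

/-- The Jacobian matrix Du(r) of a planar vector field. -/
def jacOf (u : Pt → Pt) (r : Pt) : Matrix (Fin 2) (Fin 2) ℝ :=
  fun i j => fderiv ℝ u r (EuclideanSpace.single j 1) i

/-- Action of a 2×2 matrix on a point of the plane. -/
def mulVec2 (M : Matrix (Fin 2) (Fin 2) ℝ) (v : Pt) : Pt :=
  vec2 (M 0 0 * v 0 + M 0 1 * v 1) (M 1 0 * v 0 + M 1 1 * v 1)

/-- The three-dimensional front-element vector field
    F(r, θ) = (u(r) + v₀ n̂(θ), −n̂(θ)·(Du(r) ĝ(θ))). -/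
def frontField (v₀ : ℝ) (u : Pt → Pt) (q : Pt × ℝ) : Pt × ℝ :=
  (u q.1 + v₀ • nhat q.2, -(dot (nhat q.2) (mulVec2 (jacOf u q.1) (ghat q.2))))

/-- The standard basis of ℝ² × ℝ ≃ ℝ³. -/
def basis3 : Fin 3 → Pt × ℝ :=
  ![(EuclideanSpace.single 0 1, 0), (EuclideanSpace.single 1 1, 0), ((0 : Pt), 1)]

/-- Components of a vector in ℝ² × ℝ ≃ ℝ³. -/
def comp3 (p : Pt × ℝ) : Fin 3 → ℝ := ![p.1 0, p.1 1, p.2]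

/-- The 3×3 Jacobian matrix of the front-element field at a point of ℝ² × ℝ. -/
def jac3 (v₀ : ℝ) (u : Pt → Pt) (q : Pt × ℝ) : Matrix (Fin 3) (Fin 3) ℝ :=
  fun i j => comp3 (fderiv ℝ (frontField v₀ u) q (basis3 j)) i

/-- Second partial derivative ∂ⱼ∂ₖuᵢ(r). -/
def d2 (u : Pt → Pt) (r : Pt) (i j k : Fin 2) : ℝ :=
  fderiv ℝ (fun x => fderiv ℝ u x (EuclideanSpace.single k 1) i) r (EuclideanSpace.single j 1)

/-- Divergence-free: ∂₁u₁ + ∂₂u₂ = 0 everywhere. -/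
def divFree (u : Pt → Pt) : Prop := ∀ r : Pt, jacOf u r 0 0 + jacOf u r 1 1 = 0

/-- Rotation of a planar vector by +π/2. -/
def perp (v : Pt) : Pt := vec2 (-(v 1)) (v 0)

/-- The velocity field generated by a stream function: u = (∂Ψ/∂y, −∂Ψ/∂x). -/
def uOf (Ψ : Pt → ℝ) (x : Pt) : Pt :=
  vec2 (fderiv ℝ Ψ x (EuclideanSpace.single 1 1)) (-(fderiv ℝ Ψ x (EuclideanSpace.single 0 1)))

/-- Polar angle of a point of the plane. -/
def angOf (x : Pt) : ℝ := Complex.arg ⟨x 0, x 1⟩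

/-! Along a front element `n̂' = ĝ` and `ĝ' = -n̂`, so the Jacobian at `(r, θ)` is
`[[Du, v₀ ĝ], [w, n̂·Du n̂ - ĝ·Du ĝ]]` with `w_j = -Σ n̂ᵢ ĝₖ ∂ⱼ∂ₖuᵢ`. If `Du` is traceless and
`Du ĝ = μ ĝ`, then `Duᵀ n̂ = -μ n̂`; hence the corner entry is `-2μ`, `det Du = -μ²`, and `(n̂, 0)`
is a left eigenvector of the Jacobian for `-μ`. In the frame `(ĝ, n̂, ∂θ)` what remains is the
block `[[μ, v₀], [-a·g, -2μ]]`, whose characteristic polynomial is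
`λ² + μλ - 2μ² + v₀ a·g = λ² + μλ - μμ'`. -/

@[simp] lemma vec2_apply_zero (a b : ℝ) : vec2 a b 0 = a := rfl
@[simp] lemma vec2_apply_one (a b : ℝ) : vec2 a b 1 = b := rfl

lemma neg_vec2 (a b : ℝ) : -vec2 a b = vec2 (-a) (-b) := by
  ext i; fin_cases i <;> rfl

lemma dot_mulVec2 (v w : Pt) (M : Matrix (Fin 2) (Fin 2) ℝ) :
    dot v (mulVec2 M w) = ∑ i, ∑ k, v i * M i k * w k := by
  simp only [dot, mulVec2, vec2_apply_zero, vec2_apply_one, Fin.sum_univ_two]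
  ring

lemma HasDerivAt.vec2 {f g : ℝ → ℝ} {f' g' t : ℝ} (hf : HasDerivAt f f' t)
    (hg : HasDerivAt g g' t) : HasDerivAt (fun t => vec2 (f t) (g t)) (vec2 f' g') t := by
  have h : HasDerivAt (fun t => ![f t, g t]) ![f', g'] t := by
    rw [hasDerivAt_pi]
    intro i
    fin_cases i <;> simpa
  exact (EuclideanSpace.equiv (Fin 2) ℝ).symm.hasFDerivAt.comp_hasDerivAt t h

lemma hasDerivAt_nhat (θ : ℝ) : HasDerivAt nhat (ghat θ) θ := by
  have h := (hasDerivAt_sin θ).vec2 (hasDerivAt_cos θ).neg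
  rwa [neg_neg] at h

lemma hasDerivAt_ghat (θ : ℝ) : HasDerivAt ghat (-nhat θ) θ := by
  rw [nhat, neg_vec2, neg_neg]
  exact (hasDerivAt_cos θ).vec2 (hasDerivAt_sin θ)

lemma HasDerivAt.pt_apply {f : ℝ → Pt} {f' : Pt} {t : ℝ} (hf : HasDerivAt f f' t) (i : Fin 2) :
    HasDerivAt (fun t => f t i) (f' i) t :=
  (EuclideanSpace.proj (𝕜 := ℝ) i).hasFDerivAt.comp_hasDerivAt t hf

lemma frontField_eq_sum (v₀ : ℝ) (u : Pt → Pt) : frontField v₀ u = fun q =>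
    (u q.1 + v₀ • nhat q.2, -∑ i, ∑ k, nhat q.2 i * jacOf u q.1 i k * ghat q.2 k) := by
  funext q
  rw [frontField, dot_mulVec2]

section
variable {u : Pt → Pt} {r : Pt}

lemma differentiableAt_jacOf_apply (hDu : DifferentiableAt ℝ (fderiv ℝ u) r) (i k : Fin 2) :
    DifferentiableAt ℝ (fun x => jacOf u x i k) r :=
  (EuclideanSpace.proj (𝕜 := ℝ) i).differentiableAt.comp r
    (hDu.clm_apply (differentiableAt_const _))

lemma jac3_frontField (v₀ θ : ℝ) (hu : DifferentiableAt ℝ u r)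
    (hDu : DifferentiableAt ℝ (fderiv ℝ u) r) :
    jac3 v₀ u (r, θ) =
      !![jacOf u r 0 0, jacOf u r 0 1, v₀ * cos θ;
         jacOf u r 1 0, jacOf u r 1 1, v₀ * sin θ;
         -∑ i, ∑ k, nhat θ i * d2 u r i 0 k * ghat θ k,
         -∑ i, ∑ k, nhat θ i * d2 u r i 1 k * ghat θ k,
         dot (nhat θ) (mulVec2 (jacOf u r) (nhat θ))
           - dot (ghat θ) (mulVec2 (jacOf u r) (ghat θ))] := by
  have hfst := hasFDerivAt_fst (𝕜 := ℝ) (p := (r, θ))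
  have hsnd := hasFDerivAt_snd (𝕜 := ℝ) (p := (r, θ))
  have hF₁ := (hu.hasFDerivAt.comp (r, θ) hfst).add
    (((hasDerivAt_nhat θ).hasFDerivAt.comp (r, θ) hsnd).const_smul v₀)
  have hJ := fun i k => (differentiableAt_jacOf_apply hDu i k).hasFDerivAt.comp (r, θ) hfst
  have hn := fun i => ((hasDerivAt_nhat θ).pt_apply i).comp_hasFDerivAt (r, θ) hsnd
  have hg := fun k => ((hasDerivAt_ghat θ).pt_apply k).comp_hasFDerivAt (r, θ) hsnd
  have hF₂ := (HasFDerivAt.fun_sum (u := Finset.univ) fun i _ =>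
    HasFDerivAt.fun_sum (u := Finset.univ) fun k _ => ((hn i).mul (hJ i k)).mul (hg k)).neg
  have hF : HasFDerivAt (fun q : Pt × ℝ =>
      (u q.1 + v₀ • nhat q.2, -∑ i, ∑ k, nhat q.2 i * jacOf u q.1 i k * ghat q.2 k)) _ (r, θ) :=
    hF₁.prodMk hF₂
  unfold jac3
  rw [frontField_eq_sum, hF.fderiv]
  ext i j
  fin_cases i <;> fin_cases j <;>
    simp only [comp3, basis3, ghat, jacOf, d2, dot_mulVec2, Fin.sum_univ_two, Fin.isValue,
      Matrix.of_apply, Matrix.cons_val', Matrix.cons_val_fin_one, Matrix.cons_val_zero,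
      Matrix.cons_val_one, Matrix.cons_val, Fin.zero_eta, Fin.mk_one, Fin.reduceFinMk,
      vec2_apply_zero, vec2_apply_one, Pi.mul_apply, Function.comp_apply, PiLp.neg_apply,
      PiLp.smul_apply, ContinuousLinearMap.prod_apply, ContinuousLinearMap.comp_apply,
      ContinuousLinearMap.coe_fst', ContinuousLinearMap.coe_snd',
      ContinuousLinearMap.toSpanSingleton_apply, add_apply, smul_apply, neg_apply, map_zero,
      smul_eq_mul, smul_zero, one_smul, add_zero, zero_add] <;> ring

end

theorem Matrix.charpoly_fin_three {R : Type*} [CommRing R] (M : Matrix (Fin 3) (Fin 3) R) :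
    M.charpoly = X ^ 3 - C M.trace * X ^ 2 + C M.adjugate.trace * X - C M.det := by
  rw [Matrix.charpoly, Matrix.det_fin_three, Matrix.adjugate_fin_three, Matrix.trace_fin_three,
    Matrix.trace_fin_three, Matrix.det_fin_three]
  simp only [Matrix.charmatrix_apply_eq, Matrix.charmatrix_apply_ne, ne_eq, Fin.reduceEq,
    not_false_eq_true, Matrix.of_apply, Matrix.cons_val', Matrix.cons_val_zero, Matrix.cons_val_one,
    Matrix.cons_val, Matrix.cons_val_fin_one, map_add, map_sub, map_mul]
  ring

section
variable {A : Matrix (Fin 2) (Fin 2) ℝ} {θ μ : ℝ}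

lemma mulVec2_ghat_eq_smul_iff : mulVec2 A (ghat θ) = μ • ghat θ ↔
    A 0 0 * cos θ + A 0 1 * sin θ = μ * cos θ ∧ A 1 0 * cos θ + A 1 1 * sin θ = μ * sin θ := by
  constructor
  · intro h
    exact ⟨by simpa [mulVec2, ghat] using congrArg (· 0) h,
      by simpa [mulVec2, ghat] using congrArg (· 1) h⟩
  · rintro ⟨h0, h1⟩
    ext i
    fin_cases i <;> simp [mulVec2, ghat, h0, h1]

lemma dot_ghat_mulVec2_ghat (hμ : mulVec2 A (ghat θ) = μ • ghat θ) :
    dot (ghat θ) (mulVec2 A (ghat θ)) = μ := by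
  rw [hμ]
  simp only [dot, ghat, PiLp.smul_apply, vec2_apply_zero, vec2_apply_one, smul_eq_mul]
  linear_combination μ * cos_sq_add_sin_sq θ

lemma dot_nhat_mulVec2_nhat (htr : A 0 0 + A 1 1 = 0) (hμ : mulVec2 A (ghat θ) = μ • ghat θ) :
    dot (nhat θ) (mulVec2 A (nhat θ)) = -μ := by
  obtain ⟨h0, h1⟩ := mulVec2_ghat_eq_smul_iff.1 hμ
  simp only [dot, nhat, mulVec2, vec2_apply_zero, vec2_apply_one]
  linear_combination (-cos θ) * h0 - sin θ * h1 + (cos θ ^ 2 + sin θ ^ 2) * htr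
    - μ * cos_sq_add_sin_sq θ

lemma det_eq_neg_sq_of_traceless (htr : A 0 0 + A 1 1 = 0)
    (hμ : mulVec2 A (ghat θ) = μ • ghat θ) : A.det = -μ ^ 2 := by
  obtain ⟨h0, h1⟩ := mulVec2_ghat_eq_smul_iff.1 hμ
  rw [Matrix.det_fin_two]
  linear_combination (cos θ * A 1 1 - cos θ * μ - sin θ * A 1 0) * h0
    + (sin θ * A 0 0 - sin θ * μ - cos θ * A 0 1) * h1
    + μ * (cos θ ^ 2 + sin θ ^ 2) * htr
    - (A 0 0 * A 1 1 - A 0 1 * A 1 0 + μ ^ 2) * cos_sq_add_sin_sq θ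

lemma charpoly_bordered_of_traceless (htr : A 0 0 + A 1 1 = 0)
    (hμ : mulVec2 A (ghat θ) = μ • ghat θ) (v₀ w₀ w₁ : ℝ) :
    (!![A 0 0, A 0 1, v₀ * cos θ; A 1 0, A 1 1, v₀ * sin θ; w₀, w₁, -(2 * μ)]).charpoly =
      (X + C μ) * (X ^ 2 + C μ * X - C (2 * μ ^ 2 + v₀ * (w₀ * cos θ + w₁ * sin θ))) := by
  obtain ⟨h0, h1⟩ := mulVec2_ghat_eq_smul_iff.1 hμ
  have hdetA := det_eq_neg_sq_of_traceless htr hμ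
  rw [Matrix.det_fin_two] at hdetA
  set M := !![A 0 0, A 0 1, v₀ * cos θ; A 1 0, A 1 1, v₀ * sin θ; w₀, w₁, -(2 * μ)]
  have htrace : M.trace = -(2 * μ) := by
    rw [Matrix.trace_fin_three]
    simp only [M, Matrix.of_apply, Matrix.cons_val', Matrix.cons_val_zero, Matrix.cons_val_one,
      Matrix.cons_val, Matrix.cons_val_fin_one]
    linarith
  have hminors : M.adjugate.trace = -μ ^ 2 - v₀ * (w₀ * cos θ + w₁ * sin θ) := by
    rw [Matrix.adjugate_fin_three, Matrix.trace_fin_three]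
    simp only [M, Matrix.of_apply, Matrix.cons_val', Matrix.cons_val_zero, Matrix.cons_val_one,
      Matrix.cons_val, Matrix.cons_val_fin_one]
    linear_combination hdetA - 2 * μ * htr
  have hdet : M.det = μ * (2 * μ ^ 2 + v₀ * (w₀ * cos θ + w₁ * sin θ)) := by
    rw [Matrix.det_fin_three]
    simp only [M, Matrix.of_apply, Matrix.cons_val', Matrix.cons_val_zero, Matrix.cons_val_one,
      Matrix.cons_val, Matrix.cons_val_fin_one]
    -- `h1 - sin θ * htr` and `h0 - cos θ * htr` are the two components of `Aᵀ n̂ = -μ n̂`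
    linear_combination
      (-2 * μ) * hdetA + v₀ * w₁ * (h1 - sin θ * htr) + v₀ * w₀ * (h0 - cos θ * htr)
  rw [Matrix.charpoly_fin_three, htrace, hminors, hdet]
  simp only [map_add, map_sub, map_neg, map_mul, map_pow, map_ofNat]
  ring
end

theorem charpoly_of_front_jacobian_general
    (v₀ : ℝ) (u : Pt → Pt) (hu : ContDiff ℝ 2 u) (hdiv : divFree u)
    (rs : Pt) (θs : ℝ)
    (μ : ℝ) (hμ0 : μ ≠ 0) (hμ : mulVec2 (jacOf u rs) (ghat θs) = μ • ghat θs)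
    (ag μ' : ℝ)
    (hag : ag = ∑ i : Fin 2, ∑ j : Fin 2, ∑ k : Fin 2,
      nhat θs i * ghat θs j * ghat θs k * d2 u rs i j k)
    (hμ' : μ' = (2 * μ ^ 2 - v₀ * ag) / μ) :
    (jac3 v₀ u (rs, θs)).charpoly =
      (X + C μ) * (X ^ 2 + C μ * X - C (μ * μ')) := by
  have hDu : Differentiable ℝ (fderiv ℝ u) :=
    (hu.fderiv_right (m := 1) le_rfl).differentiable one_ne_zero
  rw [jac3_frontField v₀ θs (hu.differentiable two_ne_zero rs) (hDu rs),
    dot_nhat_mulVec2_nhat (hdiv rs) hμ, dot_ghat_mulVec2_ghat hμ, ← neg_add', ← two_mul,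
    charpoly_bordered_of_traceless (hdiv rs) hμ]
  congr 3
  rw [hμ', mul_div_cancel₀ _ hμ0, hag]
  simp only [Fin.sum_univ_two, ghat, vec2_apply_zero, vec2_apply_one]
  ring

/-- For a C² divergence-free flow and a burning fixed point (r*, θ*)
with Du(r*) ĝ(θ*) = μ ĝ(θ*), μ ≠ 0, setting a·g = Σ n̂ᵢĝⱼĝₖ ∂ⱼ∂ₖuᵢ(r*) and
μ' = (2μ² − v₀ a·g)/μ, the characteristic polynomial of the Jacobian of the
front-element field at (r*, θ*) is (λ + μ)(λ² + μλ − μμ'). -/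
theorem charpoly_of_front_jacobian
    (v₀ : ℝ) (hv₀ : 0 < v₀) (u : Pt → Pt) (hu : ContDiff ℝ 2 u) (hdiv : divFree u)
    (rs : Pt) (θs : ℝ) (heq : frontField v₀ u (rs, θs) = 0)
    (μ : ℝ) (hμ0 : μ ≠ 0) (hμ : mulVec2 (jacOf u rs) (ghat θs) = μ • ghat θs)
    (ag μ' : ℝ)
    (hag : ag = ∑ i : Fin 2, ∑ j : Fin 2, ∑ k : Fin 2,
      nhat θs i * ghat θs j * ghat θs k * d2 u rs i j k)
    (hμ' : μ' = (2 * μ ^ 2 - v₀ * ag) / μ) :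
    (jac3 v₀ u (rs, θs)).charpoly =
      (X + C μ) * (X ^ 2 + C μ * X - C (μ * μ')) :=
  charpoly_of_front_jacobian_general v₀ u hu hdiv rs θs μ hμ0 hμ ag μ' hag hμ'
end
end

section
/- Let v₀ > 0 and let u : ℝ² → ℝ² be continuously differentiable. A point (r*, θ*) ∈ ℝ² × ℝ is an equilibrium of the front-element dynamics if and only if u(r*) = −v₀ n̂(θ*) and the vector Du(r*) ĝ(θ*) is a scalar multiple of ĝ(θ*) (i.e. ĝ(θ*) is an eigenvector of the Jacobian matrix Du(r*)). In particular, at every equilibrium |u(r*)| = v₀ and u(r*) is perpendicular to ĝ(θ*). -/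
noncomputable section

open Real Polynomial

lemma dot_eq_inner (v w : Pt) : dot v w = inner ℝ v w := by
  simp only [dot, PiLp.inner_apply, Fin.sum_univ_two, RCLike.inner_apply, conj_trivial]
  ring

lemma dot_nhat_ghat (θ : ℝ) : dot (nhat θ) (ghat θ) = 0 := by
  simp only [dot, nhat, ghat, vec2_apply_zero, vec2_apply_one]
  ring

lemma norm_nhat (θ : ℝ) : ‖nhat θ‖ = 1 := by
  rw [EuclideanSpace.norm_eq, Fin.sum_univ_two, Real.sqrt_eq_one]
  simp [nhat, Real.sin_sq_add_cos_sq]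

lemma dot_nhat_eq_zero_iff (θ : ℝ) (w : Pt) :
    dot (nhat θ) w = 0 ↔ ∃ c : ℝ, w = c • ghat θ := by
  have pyth := Real.sin_sq_add_cos_sq θ
  constructor
  · intro h
    simp only [dot, nhat, vec2_apply_zero, vec2_apply_one] at h
    -- (n̂(θ), ĝ(θ)) is an orthonormal basis, so the coefficient of w along ĝ(θ) is ĝ(θ)·w.
    refine ⟨Real.cos θ * w 0 + Real.sin θ * w 1, PiLp.ext fun i => ?_⟩
    fin_cases i
    · simp only [Fin.zero_eta, ghat, PiLp.smul_apply, vec2_apply_zero, smul_eq_mul]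
      linear_combination Real.sin θ * h - w 0 * pyth
    · simp only [Fin.mk_one, ghat, PiLp.smul_apply, vec2_apply_one, smul_eq_mul]
      linear_combination -Real.cos θ * h - w 1 * pyth
  · rintro ⟨c, rfl⟩
    rw [dot_eq_inner, inner_smul_right, ← dot_eq_inner, dot_nhat_ghat, mul_zero]

lemma frontField_eq_zero_iff (v₀ : ℝ) (u : Pt → Pt) (r : Pt) (θ : ℝ) :
    frontField v₀ u (r, θ) = 0 ↔
      (u r = -(v₀ • nhat θ) ∧ ∃ c : ℝ, mulVec2 (jacOf u r) (ghat θ) = c • ghat θ) := by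
  rw [Prod.ext_iff, ← dot_nhat_eq_zero_iff]
  simp only [frontField, Prod.fst_zero, Prod.snd_zero, neg_eq_zero, add_eq_zero_iff_eq_neg]

theorem bfp_characterization_general
    (v₀ : ℝ) (hv₀ : 0 < v₀) (u : Pt → Pt) :
    (∀ (r : Pt) (θ : ℝ),
      frontField v₀ u (r, θ) = 0 ↔
        (u r = -(v₀ • nhat θ) ∧ ∃ c : ℝ, mulVec2 (jacOf u r) (ghat θ) = c • ghat θ)) ∧
    (∀ (r : Pt) (θ : ℝ), frontField v₀ u (r, θ) = 0 →
      ‖u r‖ = v₀ ∧ dot (u r) (ghat θ) = 0) := by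
  refine ⟨frontField_eq_zero_iff v₀ u, fun r θ h => ?_⟩
  obtain ⟨hur, -⟩ := (frontField_eq_zero_iff v₀ u r θ).mp h
  rw [hur, norm_neg, norm_smul, norm_nhat, mul_one, Real.norm_of_nonneg hv₀.le, dot_eq_inner,
    inner_neg_left, inner_smul_left, ← dot_eq_inner, dot_nhat_ghat]
  simp

/-- (r*, θ*) is an equilibrium of the front-element dynamics iff
u(r*) = −v₀ n̂(θ*) and Du(r*) ĝ(θ*) is a scalar multiple of ĝ(θ*); in particular,
at every equilibrium |u(r*)| = v₀ and u(r*) ⊥ ĝ(θ*). -/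
theorem bfp_characterization
    (v₀ : ℝ) (hv₀ : 0 < v₀) (u : Pt → Pt) (hu : ContDiff ℝ 1 u) :
    (∀ (r : Pt) (θ : ℝ),
      frontField v₀ u (r, θ) = 0 ↔
        (u r = -(v₀ • nhat θ) ∧ ∃ c : ℝ, mulVec2 (jacOf u r) (ghat θ) = c • ghat θ)) ∧
    (∀ (r : Pt) (θ : ℝ), frontField v₀ u (r, θ) = 0 →
      ‖u r‖ = v₀ ∧ dot (u r) (ghat θ) = 0) :=
  bfp_characterization_general v₀ hv₀ u
end
end

section
/- Let v₀ > 0 and u : ℝ² → ℝ², and let (r, θ) be a sliding point with |u(r)| > v₀. Write u = u(r), u⊥ for the rotation of u by +π/2 (i.e. (u₁,u₂)⊥ = (−u₂, u₁)), and ε = sgn((u + v₀ n̂(θ)) · ĝ(θ)) ∈ {+1, −1}. Then the front-element velocity satisfies u + v₀ n̂(θ) = [1 − (v₀/|u|)²] u − ε (v₀/|u|) √(1 − (v₀/|u|)²) u⊥; that is, ṙ equals the vector field w₊ on the branch where ṙ · ĝ > 0 and w₋ on the branch where ṙ · ĝ < 0, with w± = [1 − (v₀/|u|)²] u ∓ (v₀/|u|)√(1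 − (v₀/|u|)²) u⊥. -/
noncomputable section

open Real Polynomial

/-! Sliding means that ṙ = u + v₀ n̂ is tangent to the front, ṙ = t ĝ with t = ṙ · ĝ. In the
orthonormal frame (ĝ, n̂) this gives u = t ĝ − v₀ n̂, |u|² = t² + v₀² and u⊥ = −v₀ ĝ − t n̂, so
√(1 − (v₀/|u|)²) = |t|/|u|, and since sgn t · |t| = t the branch formula collapses to an identity
between the two frame coefficients. -/

lemma eq_dot_ghat_smul_ghat_of_dot_nhat_eq_zero {w : Pt} {θ : ℝ} (h : dot w (nhat θ) = 0) :
    w = dot w (ghat θ) • ghat θ := by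
  simp only [dot, ghat, nhat, vec2, WithLp.equiv_symm_apply, PiLp.toLp_apply,
    Matrix.cons_val_zero, Matrix.cons_val_one] at h ⊢
  ext i
  fin_cases i
  · simp only [Fin.zero_eta, PiLp.smul_apply, Matrix.cons_val_zero, smul_eq_mul]
    linear_combination -(w 0) * Real.sin_sq_add_cos_sq θ + Real.sin θ * h
  · simp only [Fin.mk_one, PiLp.smul_apply, Matrix.cons_val_one, Matrix.cons_val_fin_one,
      smul_eq_mul]
    linear_combination -(w 1) * Real.sin_sq_add_cos_sq θ - Real.cos θ * h

lemma norm_smul_ghat_sub_smul_nhat_sq (a b θ : ℝ) :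
    ‖a • ghat θ - b • nhat θ‖ ^ 2 = a ^ 2 + b ^ 2 := by
  rw [EuclideanSpace.real_norm_sq_eq, Fin.sum_univ_two]
  simp only [ghat, nhat, vec2, WithLp.equiv_symm_apply, PiLp.sub_apply, PiLp.smul_apply,
    Matrix.cons_val_zero, Matrix.cons_val_one, Matrix.cons_val_fin_one, smul_eq_mul]
  linear_combination (a ^ 2 + b ^ 2) * Real.sin_sq_add_cos_sq θ

lemma perp_smul_ghat_sub_smul_nhat (a b θ : ℝ) :
    perp (a • ghat θ - b • nhat θ) = -(b • ghat θ) - a • nhat θ := by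
  ext i
  fin_cases i <;>
  · simp only [perp, ghat, nhat, vec2, WithLp.equiv_symm_apply, PiLp.sub_apply, PiLp.smul_apply,
      PiLp.neg_apply, PiLp.toLp_apply, Matrix.cons_val_zero, Matrix.cons_val_one,
      Matrix.cons_val_fin_one, Fin.zero_eta, Fin.mk_one, smul_eq_mul]
    ring

lemma Real.sign_mul_abs (t : ℝ) : Real.sign t * |t| = t := by
  rcases lt_trichotomy t 0 with ht | rfl | ht
  · rw [Real.sign_of_neg ht, abs_of_neg ht, neg_one_mul, neg_neg]
  · rw [abs_zero, mul_zero]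
  · rw [Real.sign_of_pos ht, abs_of_pos ht, one_mul]

theorem smul_ghat_eq_branch_field (t v₀ θ : ℝ) :
    t • ghat θ =
      (1 - (v₀ / ‖t • ghat θ - v₀ • nhat θ‖) ^ 2) • (t • ghat θ - v₀ • nhat θ) -
        (Real.sign t * (v₀ / ‖t • ghat θ - v₀ • nhat θ‖) *
          Real.sqrt (1 - (v₀ / ‖t • ghat θ - v₀ • nhat θ‖) ^ 2)) •
            perp (t • ghat θ - v₀ • nhat θ) := by
  have hN := norm_smul_ghat_sub_smul_nhat_sq t v₀ θ
  rw [perp_smul_ghat_sub_smul_nhat]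
  set N := ‖t • ghat θ - v₀ • nhat θ‖
  by_cases hN0 : N = 0
  · obtain ⟨rfl, rfl⟩ : t = 0 ∧ v₀ = 0 := by
      rw [hN0] at hN
      constructor <;> nlinarith [sq_nonneg t, sq_nonneg v₀]
    simp
  have hNpos : 0 < N := (norm_nonneg _).lt_of_ne' hN0
  have hsqrt : Real.sqrt (1 - (v₀ / N) ^ 2) = |t| / N := by
    have hsub : 1 - (v₀ / N) ^ 2 = (t / N) ^ 2 := by
      field_simp
      linear_combination hN
    rw [hsub, Real.sqrt_sq_eq_abs, abs_div, abs_of_pos hNpos]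
  have hcoef : Real.sign t * (v₀ / N) * (|t| / N) = v₀ * t / N ^ 2 := by
    rw [← congrArg (v₀ * · / N ^ 2) (Real.sign_mul_abs t)]
    ring
  rw [hsqrt, hcoef]
  match_scalars
  · field_simp
    ring
  · field_simp
    linear_combination v₀ * hN

theorem sliding_branch_fields_general
    (v₀ : ℝ) (u : Pt → Pt) (r : Pt) (θ : ℝ)
    (hs : dot (u r + v₀ • nhat θ) (nhat θ) = 0) :
    u r + v₀ • nhat θ =
      (1 - (v₀ / ‖u r‖) ^ 2) • u r -
        (Real.sign (dot (u r + v₀ • nhat θ) (ghat θ)) * (v₀ / ‖u r‖) *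
          Real.sqrt (1 - (v₀ / ‖u r‖) ^ 2)) • perp (u r) := by
  set t := dot (u r + v₀ • nhat θ) (ghat θ)
  have hvel : u r + v₀ • nhat θ = t • ghat θ := eq_dot_ghat_smul_ghat_of_dot_nhat_eq_zero hs
  rw [hvel, eq_sub_of_add_eq hvel]
  exact smul_ghat_eq_branch_field t v₀ θ

/-- On the fast zone, the velocity of a sliding front element equals
the branch field w± = [1 − (v₀/|u|)²] u ∓ (v₀/|u|)√(1 − (v₀/|u|)²) u⊥, with the
sign ε = sgn(ṙ·ĝ) selecting the branch. -/
theorem sliding_branch_fields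
    (v₀ : ℝ) (hv₀ : 0 < v₀) (u : Pt → Pt) (r : Pt) (θ : ℝ)
    (hs : dot (u r + v₀ • nhat θ) (nhat θ) = 0) (hfast : v₀ < ‖u r‖) :
    u r + v₀ • nhat θ =
      (1 - (v₀ / ‖u r‖) ^ 2) • u r -
        (Real.sign (dot (u r + v₀ • nhat θ) (ghat θ)) * (v₀ / ‖u r‖) *
          Real.sqrt (1 - (v₀ / ‖u r‖) ^ 2)) • perp (u r) :=
  sliding_branch_fields_general v₀ u r θ hs
end
end

section
/- Let v₀ > 0, let Ψ : ℝ² → ℝ be continuously differentiable, let u = (∂Ψ/∂y, −∂Ψ/∂x), and let (r, θ) : I → ℝ² × ℝ be a differentiable curve satisfying ṙ(t) = u(r(t)) + v₀ n̂(θ(t)) on an open interval I. Then at any time t ∈ I with ṙ(t) ≠ 0, the point (r(t), θ(t)) is sliding (i.e. ṙ(t) · n̂(θ(t)) = 0) if and only if |(d/dt) Ψ(r(t))| = v₀ |ṙ(t)|; i.e. the front elements that ascend or descend the stream function at rate exactly v₀ per unit arc length are precisely the sliding ones. -/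
noncomputable section

open Real Polynomial

/-! Since `u = -perp ∇Ψ` and `ṙ ⊥ perp ṙ`, along a trajectory
`(d/dt) Ψ(r) = ∇Ψ · ṙ = -v₀ ĝ(θ) · ṙ`. As `(ĝ(θ), n̂(θ))` is an orthonormal frame,
`|ĝ(θ) · ṙ| = |ṙ|` exactly when the normal component `ṙ · n̂(θ)` vanishes. -/

lemma dot_perp_self (v : Pt) : dot v (perp v) = 0 := by
  simp only [dot, perp, vec2, WithLp.equiv_symm_apply, Matrix.cons_val_zero, Matrix.cons_val_one,
    Matrix.cons_val_fin_one]
  ring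

lemma perp_nhat (θ : ℝ) : perp (nhat θ) = ghat θ := by
  simp [perp, nhat, ghat, vec2]

lemma fderiv_apply_eq_dot_perp_uOf (Ψ : Pt → ℝ) (x v : Pt) :
    fderiv ℝ Ψ x v = dot v (perp (uOf Ψ x)) := by
  have hv : v = v 0 • (EuclideanSpace.single 0 1 : Pt) + v 1 • EuclideanSpace.single 1 1 := by
    ext i
    fin_cases i <;> simp
  conv_lhs => rw [hv]
  simp [dot, perp, uOf, vec2]

lemma dot_add_smul_perp (w n : Pt) (c : ℝ) :
    dot (w + c • n) (perp w) = -c * dot (w + c • n) (perp n) := by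
  have h := dot_perp_self (w + c • n)
  simp only [dot, perp, vec2, PiLp.add_apply, PiLp.smul_apply, smul_eq_mul, WithLp.equiv_symm_apply,
    Matrix.cons_val_zero, Matrix.cons_val_one, Matrix.cons_val_fin_one] at h ⊢
  linear_combination h

lemma norm_sq_eq_dot_ghat_sq_add_dot_nhat_sq (v : Pt) (θ : ℝ) :
    ‖v‖ ^ 2 = dot v (ghat θ) ^ 2 + dot v (nhat θ) ^ 2 := by
  rw [EuclideanSpace.norm_sq_eq, Fin.sum_univ_two]
  simp only [dot, ghat, nhat, vec2, Real.norm_eq_abs, sq_abs, WithLp.equiv_symm_apply,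
    Matrix.cons_val_zero, Matrix.cons_val_one, Matrix.cons_val_fin_one]
  linear_combination (v 0 ^ 2 + v 1 ^ 2) * (sin_sq_add_cos_sq θ).symm

lemma abs_dot_ghat_eq_norm_iff (v : Pt) (θ : ℝ) :
    |dot v (ghat θ)| = ‖v‖ ↔ dot v (nhat θ) = 0 := by
  rw [← sq_eq_sq₀ (abs_nonneg _) (norm_nonneg _), sq_abs,
    norm_sq_eq_dot_ghat_sq_add_dot_nhat_sq v θ]
  constructor
  · intro h
    exact pow_eq_zero_iff two_ne_zero |>.mp (by linarith)
  · intro h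
    rw [h]
    ring

/-- A front element with ṙ(t) ≠ 0 is sliding if and only if the
stream function changes at rate exactly v₀ per unit arc length:
|(d/dt) Ψ(r(t))| = v₀ |ṙ(t)|. -/
theorem sliding_iff_constant_stream_rate
    (v₀ : ℝ) (hv₀ : 0 < v₀) (Ψ : Pt → ℝ) (hΨ : ContDiff ℝ 1 Ψ)
    (a b : ℝ) (r : ℝ → Pt) (θ : ℝ → ℝ)
    (hr : ∀ t ∈ Set.Ioo a b, HasDerivAt r (uOf Ψ (r t) + v₀ • nhat (θ t)) t) :
    ∀ t ∈ Set.Ioo a b, uOf Ψ (r t) + v₀ • nhat (θ t) ≠ 0 →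
      (dot (uOf Ψ (r t) + v₀ • nhat (θ t)) (nhat (θ t)) = 0 ↔
        |deriv (fun s => Ψ (r s)) t| = v₀ * ‖uOf Ψ (r t) + v₀ • nhat (θ t)‖) := by
  intro t ht _
  have hchain : HasDerivAt (fun s => Ψ (r s)) _ t :=
    (hΨ.differentiable one_ne_zero (r t)).hasFDerivAt.comp_hasDerivAt t (hr t ht)
  have hrate : deriv (fun s => Ψ (r s)) t =
      -v₀ * dot (uOf Ψ (r t) + v₀ • nhat (θ t)) (ghat (θ t)) := by
    rw [hchain.deriv, fderiv_apply_eq_dot_perp_uOf, dot_add_smul_perp, perp_nhat]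
  rw [hrate, abs_mul, abs_neg, abs_of_pos hv₀, mul_right_inj' hv₀.ne',
    abs_dot_ghat_eq_norm_iff]
end
end

section
/- A channel of width W cannot support a frozen front unless the stream-function difference across it is at least v₀W: let v₀ > 0, W > 0, let Ψ : ℝ² → ℝ be continuously differentiable, let u = (∂Ψ/∂y, −∂Ψ/∂x), and let (r, θ) : [t₀, t₁] → ℝ² × ℝ be a differentiable solution of ṙ = u(r) + v₀ n̂(θ) that is sliding (ṙ · n̂(θ) = 0) with ṙ(t) · ĝ(θ(t)) > 0 for all t, and whose endpoints lie on the two channel walls: r(t₀) has y-coordinate 0 and r(t₁) has y-coordinate W. Then Ψ(r(t₀)) − Ψ(r(t₁)) ≥ v₀ W. -/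
noncomputable section

open Real Polynomial

/-! Along the front, `Ψ` decreases at rate `v₀ λ`, where `λ = ṙ · ĝ(θ) > 0` is the speed of the
sliding front element: `∇Ψ ⊥ u`, so only the burning term `v₀ n̂` changes `Ψ`, and `∇Ψ · n̂ = −u · ĝ`.
Since `ṙ = λ ĝ(θ)`, the height `y` increases at rate `λ sin θ ≤ λ`. Hence `Ψ + v₀ y` is antitone
along the front, and comparing its values on the two walls gives the bound. -/

lemma clm_apply_eq_coord_sum (L : Pt →L[ℝ] ℝ) (v : Pt) :
    L v = v 0 * L (EuclideanSpace.single 0 1) + v 1 * L (EuclideanSpace.single 1 1) := by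
  have hv : v = v 0 • EuclideanSpace.single (0 : Fin 2) (1 : ℝ) + v 1 • EuclideanSpace.single 1 1 := by
    ext i; fin_cases i <;> simp
  conv_lhs => rw [hv]
  simp [smul_eq_mul]

lemma fderiv_apply_uOf_add_smul_nhat (Ψ : Pt → ℝ) (x : Pt) (c θ : ℝ) :
    fderiv ℝ Ψ x (uOf Ψ x + c • nhat θ) = -(c * dot (uOf Ψ x + c • nhat θ) (ghat θ)) := by
  rw [clm_apply_eq_coord_sum]
  simp only [dot, uOf, nhat, ghat, vec2, PiLp.add_apply, PiLp.smul_apply, smul_eq_mul,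
    WithLp.equiv_symm_apply, Matrix.cons_val_zero, Matrix.cons_val_one]
  ring

lemma coord_one_eq_of_dot_nhat_eq_zero {v : Pt} {θ : ℝ} (h : dot v (nhat θ) = 0) :
    v 1 = dot v (ghat θ) * sin θ := by
  simp only [dot, nhat, ghat, vec2, WithLp.equiv_symm_apply, Matrix.cons_val_zero,
    Matrix.cons_val_one] at h ⊢
  linear_combination (-cos θ) * h - v 1 * sin_sq_add_cos_sq θ

lemma antitoneOn_Icc_of_hasDerivAt_nonpos {f f' : ℝ → ℝ} {a b : ℝ}
    (hf : ∀ t ∈ Set.Icc a b, HasDerivAt f (f' t) t) (hf' : ∀ t ∈ Set.Icc a b, f' t ≤ 0) :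
    AntitoneOn f (Set.Icc a b) := by
  refine antitoneOn_of_hasDerivWithinAt_nonpos (f' := f') (convex_Icc a b)
    (fun t ht => (hf t ht).continuousAt.continuousWithinAt) (fun t ht => ?_) (fun t ht => ?_)
  all_goals rw [interior_Icc] at ht
  · exact (hf t (Set.Ioo_subset_Icc_self ht)).hasDerivWithinAt
  · exact hf' t (Set.Ioo_subset_Icc_self ht)

theorem channel_stream_function_drop_general
    (v₀ W : ℝ) (hv₀ : 0 < v₀)
    (Ψ : Pt → ℝ) (hΨ : ContDiff ℝ 1 Ψ)
    (t₀ t₁ : ℝ) (ht : t₀ ≤ t₁) (r : ℝ → Pt) (θ : ℝ → ℝ)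
    (hr : ∀ t ∈ Set.Icc t₀ t₁, HasDerivAt r (uOf Ψ (r t) + v₀ • nhat (θ t)) t)
    (hslide : ∀ t ∈ Set.Icc t₀ t₁,
      dot (uOf Ψ (r t) + v₀ • nhat (θ t)) (nhat (θ t)) = 0)
    (hpos : ∀ t ∈ Set.Icc t₀ t₁,
      0 < dot (uOf Ψ (r t) + v₀ • nhat (θ t)) (ghat (θ t)))
    (hstart : r t₀ 1 = 0) (hend : r t₁ 1 = W) :
    v₀ * W ≤ Ψ (r t₀) - Ψ (r t₁) := by
  set v : ℝ → Pt := fun t => uOf Ψ (r t) + v₀ • nhat (θ t)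
  have hderiv : ∀ t ∈ Set.Icc t₀ t₁, HasDerivAt (fun s => Ψ (r s) + v₀ * r s 1)
      (-(v₀ * dot (v t) (ghat (θ t))) + v₀ * (dot (v t) (ghat (θ t)) * sin (θ t))) t := by
    intro t ht
    have hΨr := (hΨ.differentiable one_ne_zero (r t)).hasFDerivAt.comp_hasDerivAt t (hr t ht)
    have hy := (EuclideanSpace.proj (1 : Fin 2) : Pt →L[ℝ] ℝ).hasFDerivAt.comp_hasDerivAt t (hr t ht)
    rw [← fderiv_apply_uOf_add_smul_nhat, ← coord_one_eq_of_dot_nhat_eq_zero (hslide t ht)]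
    exact hΨr.add (hy.const_mul v₀)
  have hnonpos : ∀ t ∈ Set.Icc t₀ t₁,
      -(v₀ * dot (v t) (ghat (θ t))) + v₀ * (dot (v t) (ghat (θ t)) * sin (θ t)) ≤ 0 := by
    intro t ht
    nlinarith [mul_pos hv₀ (hpos t ht), sin_le_one (θ t)]
  have hmono := antitoneOn_Icc_of_hasDerivAt_nonpos hderiv hnonpos
    (Set.left_mem_Icc.2 ht) (Set.right_mem_Icc.2 ht) ht
  simp only [hstart, hend] at hmono
  linarith

/-- A channel of width W cannot support a frozen front unless the
stream-function difference across it is at least v₀W: a cusp-free sliding front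
joining the walls y = 0 and y = W satisfies Ψ(r(t₀)) − Ψ(r(t₁)) ≥ v₀ W. -/
theorem channel_stream_function_drop
    (v₀ W : ℝ) (hv₀ : 0 < v₀) (hW : 0 < W)
    (Ψ : Pt → ℝ) (hΨ : ContDiff ℝ 1 Ψ)
    (t₀ t₁ : ℝ) (ht : t₀ ≤ t₁) (r : ℝ → Pt) (θ : ℝ → ℝ)
    (hr : ∀ t ∈ Set.Icc t₀ t₁, HasDerivAt r (uOf Ψ (r t) + v₀ • nhat (θ t)) t)
    (hslide : ∀ t ∈ Set.Icc t₀ t₁,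
      dot (uOf Ψ (r t) + v₀ • nhat (θ t)) (nhat (θ t)) = 0)
    (hpos : ∀ t ∈ Set.Icc t₀ t₁,
      0 < dot (uOf Ψ (r t) + v₀ • nhat (θ t)) (ghat (θ t)))
    (hstart : r t₀ 1 = 0) (hend : r t₁ 1 = W) :
    v₀ * W ≤ Ψ (r t₀) - Ψ (r t₁) :=
  channel_stream_function_drop_general v₀ W hv₀ Ψ hΨ t₀ t₁ ht r θ hr hslide hpos hstart hend
end
end

section
/- Let v₀ > 0, μ > 0, and 2 < c ≤ 9/4, and define u : ℝ² → ℝ² by u(x, y) = (−v₀ − μx + (cμ²/(2v₀)) y², μy). Then all three eigenvalues of the Jacobian matrix at ((0,0), π/2) of the three-dimensional vector field F(r, θ) = (u(r) + v₀ n̂(θ), −n̂(θ)·(Du(r) ĝ(θ))) are real and negative; explicitly they are −μ and (1/2)(−μ ± μ√(9 − 4c)). In particular the equilibrium ((0,0), π/2) is a burning fixed point of stability type SSS with real eigenvalues. -/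
/-!
With k = cμ²/(2v₀) the flow has Du(x, y) = [[−μ, 2ky], [0, μ]], so the front-element field is
F(x, y, θ) = (−v₀ − μx + ky² + v₀ sin θ, μy − v₀ cos θ, 2μ sin θ cos θ − 2ky sin²θ).
At ((0,0), π/2) its Jacobian is block triangular: the x-row gives the eigenvalue −μ, and the
(y, θ) block [[μ, v₀], [−2k, −2μ]] has trace −μ and determinant (c − 2)μ², so its eigenvalues
are (−μ ± μ√(9 − 4c))/2, real since c ≤ 9/4 and negative since c > 2.
-/

noncomputable section

open Real Polynomial

lemma hasFDerivAt_vec2 {E : Type*} [NormedAddCommGroup E] [NormedSpace ℝ E]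
    {f g : E → ℝ} {f' g' : E →L[ℝ] ℝ} {x : E}
    (hf : HasFDerivAt f f' x) (hg : HasFDerivAt g g' x) :
    HasFDerivAt (fun y => vec2 (f y) (g y))
      (f'.smulRight (EuclideanSpace.single 0 1) + g'.smulRight (EuclideanSpace.single 1 1)) x := by
  have h : (fun y => vec2 (f y) (g y)) =
      fun y => f y • EuclideanSpace.single (0 : Fin 2) (1 : ℝ) +
        g y • EuclideanSpace.single (1 : Fin 2) (1 : ℝ) := by
    funext y; ext i; fin_cases i <;> simp [vec2]
  rw [h]
  exact (hf.smul_const _).add (hg.smul_const _)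

lemma jacOf_eq_of_hasFDerivAt {u : Pt → Pt} {r : Pt} {f g : Pt → ℝ} {f' g' : Pt →L[ℝ] ℝ}
    (hu : u = fun x => vec2 (f x) (g x)) (hf : HasFDerivAt f f' r) (hg : HasFDerivAt g g' r) :
    jacOf u r = Matrix.of fun i j => ![f', g'] i (EuclideanSpace.single j 1) := by
  ext i j
  rw [jacOf, hu, (hasFDerivAt_vec2 hf hg).fderiv]
  fin_cases i <;> simp

lemma jac3_eq_of_hasFDerivAt {v₀ : ℝ} {u : Pt → Pt} {q : Pt × ℝ} {f g h : Pt × ℝ → ℝ}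
    {f' g' h' : (Pt × ℝ) →L[ℝ] ℝ}
    (hF : frontField v₀ u = fun q => (vec2 (f q) (g q), h q))
    (hf : HasFDerivAt f f' q) (hg : HasFDerivAt g g' q) (hh : HasFDerivAt h h' q) :
    jac3 v₀ u q = Matrix.of fun i j => ![f', g', h'] i (basis3 j) := by
  ext i j
  rw [jac3, hF, ((hasFDerivAt_vec2 hf hg).prodMk hh).fderiv]
  fin_cases i <;> simp [comp3]

section QuadFlow

variable (v₀ μ k : ℝ)

def quadFlow (x : Pt) : Pt := vec2 (-v₀ - μ * x 0 + k * x 1 ^ 2) (μ * x 1)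

lemma jacOf_quadFlow (r : Pt) : jacOf (quadFlow v₀ μ k) r = !![-μ, 2 * k * r 1; 0, μ] := by
  have h0 := (EuclideanSpace.proj (𝕜 := ℝ) (0 : Fin 2)).hasFDerivAt (x := r)
  have h1 := (EuclideanSpace.proj (𝕜 := ℝ) (1 : Fin 2)).hasFDerivAt (x := r)
  rw [jacOf_eq_of_hasFDerivAt (u := quadFlow v₀ μ k)
    (f := fun x => -v₀ - μ * x 0 + k * x 1 ^ 2) (g := fun x => μ * x 1) rfl
    (((hasFDerivAt_const (-v₀) r).sub (h0.const_mul μ)).add ((h1.pow 2).const_mul k))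
    (h1.const_mul μ)]
  ext i j
  fin_cases i <;> fin_cases j <;> simp [mul_comm k, mul_assoc]

lemma frontField_quadFlow :
    frontField v₀ (quadFlow v₀ μ k) = fun q =>
      (vec2 (-v₀ - μ * q.1 0 + k * q.1 1 ^ 2 + v₀ * sin q.2) (μ * q.1 1 - v₀ * cos q.2),
        2 * μ * sin q.2 * cos q.2 - 2 * k * q.1 1 * sin q.2 ^ 2) := by
  funext q
  simp only [frontField, jacOf_quadFlow]
  refine Prod.ext ?_ ?_
  · ext i
    fin_cases i <;> simp [quadFlow, vec2, nhat, sub_eq_add_neg]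
  · simp [dot, mulVec2, nhat, ghat, vec2]
    ring

lemma jac3_quadFlow :
    jac3 v₀ (quadFlow v₀ μ k) ((0 : Pt), π / 2) =
      !![-μ, 0, 0; 0, μ, v₀; 0, -(2 * k), -(2 * μ)] := by
  set q₀ : Pt × ℝ := ((0 : Pt), π / 2)
  have hx := ((EuclideanSpace.proj (𝕜 := ℝ) (0 : Fin 2)).comp
    (ContinuousLinearMap.fst ℝ Pt ℝ)).hasFDerivAt (x := q₀)
  have hy := ((EuclideanSpace.proj (𝕜 := ℝ) (1 : Fin 2)).comp
    (ContinuousLinearMap.fst ℝ Pt ℝ)).hasFDerivAt (x := q₀)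
  have hθ := hasFDerivAt_snd (𝕜 := ℝ) (p := q₀)
  have hsin := (hasDerivAt_sin q₀.2).comp_hasFDerivAt q₀ hθ
  have hcos := (hasDerivAt_cos q₀.2).comp_hasFDerivAt q₀ hθ
  rw [jac3_eq_of_hasFDerivAt (frontField_quadFlow v₀ μ k)
    ((((hasFDerivAt_const (-v₀) q₀).sub (hx.const_mul μ)).add ((hy.pow 2).const_mul k)).add
      (hsin.const_mul v₀))
    ((hy.const_mul μ).sub (hcos.const_mul v₀))
    (((hsin.const_mul (2 * μ)).mul hcos).sub ((hy.const_mul (2 * k)).mul (hsin.pow 2)))]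
  ext i j
  fin_cases i <;> fin_cases j <;> simp [q₀, basis3]

end QuadFlow

lemma charpoly_blockDiag_one_two {R : Type*} [CommRing R] (a b c d e r₁ r₂ : R)
    (hsum : r₁ + r₂ = b + e) (hprod : r₁ * r₂ = b * e - c * d) :
    (!![a, 0, 0; 0, b, c; 0, d, e] : Matrix (Fin 3) (Fin 3) R).charpoly =
      (X - C a) * ((X - C r₁) * (X - C r₂)) := by
  have hsum' : (C r₁ + C r₂ : R[X]) = C b + C e := by rw [← C_add, hsum, C_add]
  have hprod' : (C r₁ * C r₂ : R[X]) = C b * C e - C c * C d := by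
    rw [← C_mul, hprod, C_sub, C_mul, C_mul]
  rw [Matrix.charpoly, Matrix.det_fin_three]
  simp only [Fin.isValue, Matrix.charmatrix_apply_eq, Matrix.of_apply, Matrix.cons_val',
    Matrix.cons_val_zero, Matrix.cons_val_fin_one, Matrix.cons_val_one, Matrix.cons_val, ne_eq,
    Fin.reduceEq, not_false_eq_true, Matrix.charmatrix_apply_ne, mul_neg, neg_mul, neg_neg,
    zero_ne_one, map_zero, neg_zero, one_ne_zero, mul_zero, zero_mul, sub_zero, add_zero]
  linear_combination (X - C a) * X * hsum' - (X - C a) * hprod'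

lemma roots_map_prod_three_X_sub_C {R S : Type*} [CommRing R] [CommRing S]
    [IsDomain S] [Algebra R S] (a b d : R) :
    (((X - C a) * ((X - C b) * (X - C d))).map (algebraMap R S)).roots =
      {algebraMap R S a, algebraMap R S b, algebraMap R S d} := by
  simp only [Polynomial.map_mul, Polynomial.map_sub, map_X, map_C]
  rw [roots_mul (by simp [X_sub_C_ne_zero]), roots_mul (by simp [X_sub_C_ne_zero])]
  simp only [roots_X_sub_C]
  rfl

/-- For the explicit flow with μ > 0 and 2 < c ≤ 9/4, the three
eigenvalues of the Jacobian of the front-element field at ((0,0), π/2) are the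
real negative numbers −μ and (1/2)(−μ ± μ√(9 − 4c)); in particular the
equilibrium is a burning fixed point of stability type SSS. -/
theorem sss_example_eigenvalues
    (v₀ μ c : ℝ) (hv₀ : 0 < v₀) (hμ : 0 < μ) (hc1 : 2 < c) (hc2 : c ≤ 9 / 4) :
    let u : Pt → Pt := fun x =>
      vec2 (-v₀ - μ * x 0 + (c * μ ^ 2 / (2 * v₀)) * (x 1) ^ 2) (μ * x 1)
    (((jac3 v₀ u ((0 : Pt), π / 2)).charpoly).map (algebraMap ℝ ℂ)).roots =
      {((-μ : ℝ) : ℂ),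
       (((-μ + μ * Real.sqrt (9 - 4 * c)) / 2 : ℝ) : ℂ),
       (((-μ - μ * Real.sqrt (9 - 4 * c)) / 2 : ℝ) : ℂ)} ∧
    (∀ z ∈ (((jac3 v₀ u ((0 : Pt), π / 2)).charpoly).map (algebraMap ℝ ℂ)).roots,
      z.re < 0) := by
  intro u
  have hu : u = quadFlow v₀ μ (c * μ ^ 2 / (2 * v₀)) := rfl
  set s := √(9 - 4 * c)
  have hs : s ^ 2 = 9 - 4 * c := sq_sqrt (by linarith)
  have hs1 : s < 1 := (sqrt_lt' one_pos).2 (by linarith)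
  have hk : 2 * (c * μ ^ 2 / (2 * v₀)) * v₀ = c * μ ^ 2 := by field_simp
  have hroots : (((jac3 v₀ u ((0 : Pt), π / 2)).charpoly).map (algebraMap ℝ ℂ)).roots =
      {((-μ : ℝ) : ℂ), (((-μ + μ * s) / 2 : ℝ) : ℂ), (((-μ - μ * s) / 2 : ℝ) : ℂ)} := by
    rw [hu, jac3_quadFlow,
      charpoly_blockDiag_one_two _ _ _ _ _ ((-μ + μ * s) / 2) ((-μ - μ * s) / 2) (by ring)
      (by linear_combination (-(μ ^ 2) / 4) * hs - hk),
      roots_map_prod_three_X_sub_C]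
    rfl
  refine ⟨hroots, fun z hz => ?_⟩
  simp only [hroots, Multiset.insert_eq_cons, Multiset.mem_cons, Multiset.mem_singleton] at hz
  rcases hz with rfl | rfl | rfl <;> simp <;> nlinarith
end
end
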